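/- arXiv:1010.0716 — 4 statements merged into one kernel-verified Lean document; each statement's English description precedes it below -/
import Mathlib

section
/- Let S be a finite left regular band with identity, L its lattice of principal left ideals, σ : S → L the support map, k a field, w = Σ_{t∈S} w_t t ∈ kS, and λ_X = Σ_{σ(t)≥X} w_t for X ∈ L. Assume X > Y implies λ_X ≠ λ_Y. For X ∈ L define p_X(z) = Π_{λ ∈ {λ_Y : Y ≤ X}} (z − λ). Then for every s ∈ S, s · p_{σ(s)}(w) = 0 in kS. -/
/-!
Write `w = ∑ c t • t`. In a left regular band `s * t = s` exactly when `Ss ⊆ St`, so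
`s * (w - λ_s) = ∑_{s t ≠ s} c t • (s t)`, and every `s t` occurring has `S(st) ⊊ Ss`.
The roots of `p_{σ(st)}` are eigenvalues `λ_Y` with `Y < σ(s)`, which by the distinctness
hypothesis differ from `λ_s`; hence `(z - λ_s) p_{σ(st)}` divides `p_{σ(s)}`, and the
claim follows by well-founded induction on `σ(s)`.
-/

/-- The principal left ideal `Ss = {u * s : u ∈ S}` generated by `s`. -/
def leftIdeal {S : Type*} [Monoid S] (s : S) : Set S := {x | ∃ u, x = u * s}

open Polynomial

section LeftIdeal

variable {S : Type*} [Monoid S]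

lemma mem_leftIdeal_self (s : S) : s ∈ leftIdeal s := ⟨1, (one_mul s).symm⟩

lemma leftIdeal_subset_iff_mul_eq (idem : ∀ x : S, x * x = x) {t s : S} :
    leftIdeal t ⊆ leftIdeal s ↔ t * s = t := by
  constructor
  · intro h
    obtain ⟨u, hu⟩ := h (mem_leftIdeal_self t)
    rw [hu, mul_assoc, idem]
  · rintro h x ⟨u, rfl⟩
    exact ⟨u * t, by rw [mul_assoc, h]⟩

lemma leftIdeal_mul_ssubset (idem : ∀ x : S, x * x = x) (lrb : ∀ x y : S, x * y * x = x * y)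
    {s t : S} (h : s * t ≠ s) : leftIdeal (s * t) ⊂ leftIdeal s := by
  refine ⟨(leftIdeal_subset_iff_mul_eq idem).mpr (lrb s t), fun hs => h ?_⟩
  have hsst := (leftIdeal_subset_iff_mul_eq idem).mp hs
  rwa [← mul_assoc, idem] at hsst

end LeftIdeal

section SupportPoly

variable {S : Type*} [Monoid S] [Fintype S] {k : Type*}

open scoped Classical

/-- The set `{λ_Y : Y ≤ σ(s)}`. -/
noncomputable def supportValues (lam : S → k) (s : S) : Finset k :=
  (Finset.univ.filter (fun y : S => leftIdeal y ⊆ leftIdeal s)).image lam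

lemma supportValues_subset_erase {lam : S → k}
    (hdist : ∀ x y : S, leftIdeal y ⊂ leftIdeal x → lam x ≠ lam y)
    {x y : S} (hyx : leftIdeal y ⊂ leftIdeal x) :
    supportValues lam y ⊆ (supportValues lam x).erase (lam x) := by
  intro μ hμ
  obtain ⟨z, hz, rfl⟩ := Finset.mem_image.mp hμ
  have hzy : leftIdeal z ⊆ leftIdeal y := (Finset.mem_filter.mp hz).2
  refine Finset.mem_erase.mpr ⟨(hdist x z (hzy.trans_ssubset hyx)).symm, ?_⟩
  exact Finset.mem_image.mpr ⟨z, Finset.mem_filter.mpr ⟨Finset.mem_univ z, hzy.trans hyx.1⟩, rfl⟩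

lemma lam_mem_supportValues (lam : S → k) (s : S) : lam s ∈ supportValues lam s :=
  Finset.mem_image.mpr ⟨s, Finset.mem_filter.mpr ⟨Finset.mem_univ s, subset_rfl⟩, rfl⟩

lemma single_mul_sub_algebraMap_eq_sum [CommRing k]
    (idem : ∀ x : S, x * x = x) (c lam : S → k)
    (hlam : ∀ x : S, lam x = ∑ t ∈ Finset.univ.filter (fun t : S => leftIdeal x ⊆ leftIdeal t), c t)
    (s : S) :
    MonoidAlgebra.single s (1 : k) *
        (∑ t : S, MonoidAlgebra.single t (c t) - algebraMap k (MonoidAlgebra k S) (lam s)) =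
      ∑ t ∈ Finset.univ.filter (fun t : S => s * t ≠ s), MonoidAlgebra.single (s * t) (c t) := by
  have hfix : ∑ t ∈ Finset.univ.filter (fun t : S => s * t = s),
      MonoidAlgebra.single (s * t) (c t) = MonoidAlgebra.single s (lam s) :=
    calc _ = ∑ t ∈ Finset.univ.filter (fun t : S => s * t = s), MonoidAlgebra.single s (c t) :=
          Finset.sum_congr rfl fun t ht => by rw [(Finset.mem_filter.mp ht).2]
      _ = MonoidAlgebra.single s (∑ t ∈ Finset.univ.filter (fun t : S => s * t = s), c t) :=
          (map_sum (MonoidAlgebra.singleAddHom s) c _).symm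
      _ = MonoidAlgebra.single s (lam s) := by
          rw [hlam s, Finset.filter_congr fun t _ => leftIdeal_subset_iff_mul_eq idem]
  rw [mul_sub, Finset.mul_sum, MonoidAlgebra.coe_algebraMap, Function.comp_apply,
    MonoidAlgebra.single_mul_single, mul_one, Algebra.algebraMap_self, RingHom.id_apply, one_mul,
    ← Finset.sum_filter_add_sum_filter_not Finset.univ (fun t : S => s * t = s)]
  simp only [MonoidAlgebra.single_mul_single, one_mul]
  rw [hfix, add_sub_cancel_left]

theorem single_mul_aeval_prod_supportValues_eq_zero [CommRing k]
    (idem : ∀ x : S, x * x = x) (lrb : ∀ x y : S, x * y * x = x * y) (c lam : S → k)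
    (hlam : ∀ x : S, lam x = ∑ t ∈ Finset.univ.filter (fun t : S => leftIdeal x ⊆ leftIdeal t), c t)
    (hdist : ∀ x y : S, leftIdeal y ⊂ leftIdeal x → lam x ≠ lam y) (s : S) :
    MonoidAlgebra.single s (1 : k) * aeval (∑ t : S, MonoidAlgebra.single t (c t))
      (∏ μ ∈ supportValues lam s, (X - C μ)) = 0 := by
  have wf : WellFounded fun x y : S => leftIdeal x ⊂ leftIdeal y := InvImage.wf _ wellFounded_lt
  induction s using wf.induction with | _ s ih
  set w := ∑ t : S, MonoidAlgebra.single t (c t)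
  set q : k[X] := ∏ μ ∈ (supportValues lam s).erase (lam s), (X - C μ)
  have hq : ∀ t, s * t ≠ s → MonoidAlgebra.single (s * t) (1 : k) * aeval w q = 0 := by
    intro t ht
    have hlt := leftIdeal_mul_ssubset idem lrb ht
    obtain ⟨r, hr⟩ : ∏ μ ∈ supportValues lam (s * t), (X - C μ) ∣ q :=
      Finset.prod_dvd_prod_of_subset _ _ _ (supportValues_subset_erase hdist hlt)
    rw [hr, map_mul, ← mul_assoc, ih _ hlt, zero_mul]
  rw [← Finset.mul_prod_erase _ _ (lam_mem_supportValues lam s), map_mul, map_sub, aeval_X,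
    aeval_C, ← mul_assoc, single_mul_sub_algebraMap_eq_sum idem c lam hlam, Finset.sum_mul]
  refine Finset.sum_eq_zero fun t ht => ?_
  rw [← mul_one (c t), ← MonoidAlgebra.smul_single', smul_mul_assoc,
    hq t (Finset.mem_filter.mp ht).2, smul_zero]

end SupportPoly

open Polynomial in
open Classical in
theorem stmt_4 {S : Type*} [Monoid S] [Fintype S]
    (idem : ∀ x : S, x * x = x) (lrb : ∀ x y : S, x * y * x = x * y)
    (k : Type*) [Field k] (c : S → k)
    (w : MonoidAlgebra k S) (hw : w = ∑ t : S, MonoidAlgebra.single t (c t))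
    (lam : S → k)
    (hlam : ∀ x : S,
      lam x = ∑ t ∈ Finset.univ.filter (fun t : S => leftIdeal x ⊆ leftIdeal t), c t)
    (hdist : ∀ x y : S, leftIdeal y ⊂ leftIdeal x → lam x ≠ lam y)
    (s : S)
    (p : k[X])
    (hp : p = ∏ μ ∈ (Finset.univ.filter
        (fun y : S => leftIdeal y ⊆ leftIdeal s)).image lam, (X - C μ)) :
    MonoidAlgebra.single s (1 : k) * Polynomial.aeval w p = 0 := by
  rw [hw, hp]
  exact single_mul_aeval_prod_supportValues_eq_zero idem lrb c lam hlam hdist s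
end

section
/- Let S be a finite left regular band with identity, L its lattice of principal left ideals, σ the support map, k a field, w = Σ_{t∈S} w_t t ∈ kS, and λ_X = Σ_{σ(t)≥X} w_t. If λ₁, …, λ_k are the distinct elements of {λ_X : X ∈ L} and X > Y implies λ_X ≠ λ_Y, then Π_{i=1}^{k} (w − λᵢ) = 0 in kS. -/
open Polynomial Finset

namespace MonoidAlgebra

variable {k M : Type*} [CommSemiring k] [Monoid M]

noncomputable def filterAlgHom (p : M → Prop) [DecidablePred p] (one : p 1)
    (mul_iff : ∀ a b, p (a * b) ↔ p a ∧ p b) : MonoidAlgebra k M →ₐ[k] MonoidAlgebra k M :=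
  lift k (MonoidAlgebra k M) M
    { toFun := fun m => if p m then single m 1 else 0
      map_one' := by rw [if_pos one]; rfl
      map_mul' := fun a b => by
        by_cases ha : p a <;> by_cases hb : p b <;>
          simp [ha, hb, mul_iff, single_mul_single] }

section filterAlgHom

variable {p : M → Prop} [DecidablePred p] {one : p 1} {mul_iff : ∀ a b, p (a * b) ↔ p a ∧ p b}

theorem filterAlgHom_single (m : M) (r : k) :
    filterAlgHom p one mul_iff (single m r) = if p m then single m r else 0 := by
  rw [filterAlgHom, lift_single]
  change r • (if p m then single m 1 else 0) = _
  split_ifs <;> simp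

theorem coeff_filterAlgHom (V : MonoidAlgebra k M) (m : M) :
    (filterAlgHom p one mul_iff V).coeff m = if p m then V.coeff m else 0 := by
  induction V using induction_linear with
  | zero => simp
  | add V W hV hW => simp only [map_add, coeff_add, Finsupp.add_apply, hV, hW]; split_ifs <;> simp
  | single m' r =>
    rw [filterAlgHom_single]
    by_cases hm : m' = m
    · subst hm; split_ifs <;> simp
    · split_ifs <;> simp [coeff_single, hm]

theorem filterAlgHom_filterAlgHom_of_imp {q : M → Prop} [DecidablePred q] {one' : q 1}
    {mul_iff' : ∀ a b, q (a * b) ↔ q a ∧ q b} (h : ∀ m, q m → p m) (V : MonoidAlgebra k M) :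
    filterAlgHom q one' mul_iff' (filterAlgHom p one mul_iff V) =
      filterAlgHom q one' mul_iff' V := by
  ext m
  simp only [coeff_filterAlgHom]
  by_cases hq : q m <;> simp [hq, h m]

theorem filterAlgHom_apply_eq_self (h : ∀ m, p m) (V : MonoidAlgebra k M) :
    filterAlgHom p one mul_iff V = V := by
  ext m
  simp [coeff_filterAlgHom, h m]

end filterAlgHom

theorem mul_single_of_forall_mul_eq {V : MonoidAlgebra k M} {s : M}
    (h : ∀ t ∈ V.coeff.support, t * s = t) (r : k) : V * single s r = r • V := by
  conv_lhs => rw [← sum_coeff_single V]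
  conv_rhs => rw [← sum_coeff_single V]
  rw [Finsupp.sum_mul, Finsupp.smul_sum]
  refine Finsupp.sum_congr fun t ht => ?_
  rw [single_mul_single, h t ht, smul_single', mul_comm]

end MonoidAlgebra

namespace LeftRegularBand

variable {S : Type*} [Monoid S]

theorem self_mem_leftIdeal (a : S) : a ∈ leftIdeal a := ⟨1, (one_mul a).symm⟩

theorem leftIdeal_one : leftIdeal (1 : S) = Set.univ :=
  Set.eq_univ_of_forall fun u => ⟨u, (mul_one u).symm⟩

theorem mem_leftIdeal_iff (idem : ∀ x : S, x * x = x) {u a : S} :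
    u ∈ leftIdeal a ↔ u * a = u := by
  refine ⟨?_, fun h => ⟨u, h.symm⟩⟩
  rintro ⟨v, rfl⟩
  rw [mul_assoc, idem]

theorem leftIdeal_mul (idem : ∀ x : S, x * x = x) (lrb : ∀ x y : S, x * y * x = x * y)
    (a b : S) : leftIdeal (a * b) = leftIdeal a ∩ leftIdeal b := by
  ext u
  simp only [Set.mem_inter_iff, mem_leftIdeal_iff idem]
  constructor
  · intro h
    refine ⟨?_, ?_⟩
    · rw [← h, mul_assoc, lrb]
    · rw [← h, mul_assoc, mul_assoc, idem]
  · rintro ⟨ha, hb⟩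
    rw [← mul_assoc, ha, hb]

theorem exists_leftIdeal_subset_forall [Finite S] (idem : ∀ x : S, x * x = x)
    (lrb : ∀ x y : S, x * y * x = x * y) : ∃ z : S, ∀ t, leftIdeal z ⊆ leftIdeal t := by
  obtain ⟨z, hz⟩ := Finite.exists_min fun x : S => (leftIdeal x).ncard
  refine ⟨z, fun t => ?_⟩
  have hzt : leftIdeal (z * t) = leftIdeal z :=
    Set.eq_of_subset_of_ncard_le (by rw [leftIdeal_mul idem lrb]; exact Set.inter_subset_left)
      (hz _)
  rw [← hzt, leftIdeal_mul idem lrb]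
  exact Set.inter_subset_right

open Classical in
noncomputable def projGE (k : Type*) [CommSemiring k] (idem : ∀ x : S, x * x = x)
    (lrb : ∀ x y : S, x * y * x = x * y) (x : S) : MonoidAlgebra k S →ₐ[k] MonoidAlgebra k S :=
  MonoidAlgebra.filterAlgHom (fun t => leftIdeal x ⊆ leftIdeal t)
    (by simp only [leftIdeal_one, Set.subset_univ])
    (fun a b => by simp only [leftIdeal_mul idem lrb, Set.subset_inter_iff])

section Spectrum

open Classical

variable [Fintype S] {k : Type*}

noncomputable def spectrumGE (lam : S → k) (x : S) : Finset k :=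
  (univ.filter fun t => leftIdeal x ⊆ leftIdeal t).image lam

noncomputable def spectrumGT (lam : S → k) (x : S) : Finset k :=
  (univ.filter fun t => leftIdeal x ⊂ leftIdeal t).image lam

theorem spectrumGE_eq_insert_spectrumGT {lam : S → k}
    (hlam : ∀ x y : S, leftIdeal x = leftIdeal y → lam x = lam y) (x : S) :
    spectrumGE lam x = insert (lam x) (spectrumGT lam x) := by
  refine Subset.antisymm (fun μ hμ => ?_) (insert_subset ?_ ?_)
  · obtain ⟨t, ht, rfl⟩ := mem_image.1 hμ
    rcases (mem_filter.1 ht).2.eq_or_ssubset with h | h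
    · exact hlam x t h ▸ mem_insert_self _ _
    · exact mem_insert_of_mem (mem_image_of_mem lam (mem_filter.2 ⟨mem_univ t, h⟩))
  · exact mem_image_of_mem lam (mem_filter.2 ⟨mem_univ x, subset_rfl⟩)
  · exact image_subset_image (monotone_filter_right _ fun _ _ h => h.subset)

theorem apply_notMem_spectrumGT {lam : S → k}
    (hdist : ∀ x y : S, leftIdeal y ⊂ leftIdeal x → lam x ≠ lam y) (x : S) :
    lam x ∉ spectrumGT lam x := by
  simp only [spectrumGT, mem_image, mem_filter, mem_univ, true_and, not_exists, not_and]
  exact fun t hxt => hdist t x hxt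

theorem spectrumGE_subset_spectrumGT (lam : S → k) {x y : S}
    (h : leftIdeal x ⊂ leftIdeal y) : spectrumGE lam y ⊆ spectrumGT lam x :=
  image_subset_image (monotone_filter_right _ fun _ _ hyt => h.trans_subset hyt)

end Spectrum

section Projection

open Classical MonoidAlgebra

variable {k : Type*} [CommRing k] (idem : ∀ x : S, x * x = x) (lrb : ∀ x y : S, x * y * x = x * y)

theorem coeff_projGE (x t : S) (V : MonoidAlgebra k S) :
    (projGE k idem lrb x V).coeff t = if leftIdeal x ⊆ leftIdeal t then V.coeff t else 0 :=
  coeff_filterAlgHom V t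

theorem projGE_projGE_of_subset {x y : S} (h : leftIdeal x ⊆ leftIdeal y)
    (V : MonoidAlgebra k S) :
    projGE k idem lrb y (projGE k idem lrb x V) = projGE k idem lrb y V :=
  filterAlgHom_filterAlgHom_of_imp (fun _ hy => h.trans hy) V

theorem projGE_sum_single [Fintype S] (c : S → k) (x : S) :
    projGE k idem lrb x (∑ t, single t (c t)) =
      ∑ t ∈ univ.filter (fun t => leftIdeal x ⊆ leftIdeal t), single t (c t) := by
  rw [map_sum, sum_filter]
  exact sum_congr rfl fun t _ => filterAlgHom_single t (c t)

theorem mul_projGE_sum_single [Fintype S] {V : MonoidAlgebra k S} {x : S}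
    (hV : ∀ t ∈ V.coeff.support, leftIdeal t ⊆ leftIdeal x) (c : S → k) :
    V * projGE k idem lrb x (∑ t, single t (c t)) =
      (∑ t ∈ univ.filter (fun t => leftIdeal x ⊆ leftIdeal t), c t) • V := by
  rw [projGE_sum_single, mul_sum, sum_smul]
  refine sum_congr rfl fun s hs => mul_single_of_forall_mul_eq (fun t ht => ?_) _
  exact (mem_leftIdeal_iff idem).1 ((hV t ht).trans (mem_filter.1 hs).2 (self_mem_leftIdeal t))

theorem coeff_aeval_projGE_eq_zero {x t : S} (ht : leftIdeal t ≠ leftIdeal x)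
    (w : MonoidAlgebra k S) {q : k[X]}
    (hq : ∀ y, leftIdeal x ⊂ leftIdeal y → aeval (projGE k idem lrb y w) q = 0) :
    (aeval (projGE k idem lrb x w) q).coeff t = 0 := by
  by_cases hxt : leftIdeal x ⊆ leftIdeal t
  · have h := coeff_projGE idem lrb t t (aeval (projGE k idem lrb x w) q)
    rwa [if_pos subset_rfl, ← aeval_algHom_apply, projGE_projGE_of_subset idem lrb hxt,
      hq t (hxt.ssubset_of_ne (Ne.symm ht)), MonoidAlgebra.coeff_zero, Finsupp.zero_apply,
      eq_comm] at h
  · rw [aeval_algHom_apply, coeff_projGE, if_neg hxt]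

theorem aeval_projGE_prod_spectrumGE_eq_zero [Fintype S] (c lam : S → k)
    (hlam : ∀ x : S,
      lam x = ∑ t ∈ univ.filter (fun t : S => leftIdeal x ⊆ leftIdeal t), c t)
    (hdist : ∀ x y : S, leftIdeal y ⊂ leftIdeal x → lam x ≠ lam y) (x : S) :
    aeval (projGE k idem lrb x (∑ t, single t (c t))) (∏ μ ∈ spectrumGE lam x, (X - C μ)) = 0 := by
  set w : MonoidAlgebra k S := ∑ t, single t (c t)
  have hGT : ∀ y, leftIdeal x ⊂ leftIdeal y →
      aeval (projGE k idem lrb y w) (∏ μ ∈ spectrumGT lam x, (X - C μ)) = 0 := fun y hy =>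
    aeval_eq_zero_of_dvd_aeval_eq_zero
      (prod_dvd_prod_of_subset _ _ _ (spectrumGE_subset_spectrumGT lam hy))
      (aeval_projGE_prod_spectrumGE_eq_zero c lam hlam hdist y)
  set H := aeval (projGE k idem lrb x w) (∏ μ ∈ spectrumGT lam x, (X - C μ))
  have hH : H * projGE k idem lrb x w = lam x • H := by
    refine (mul_projGE_sum_single idem lrb (fun t ht => ?_) c).trans (by rw [hlam])
    by_contra hne
    exact Finsupp.mem_support_iff.1 ht
      (coeff_aeval_projGE_eq_zero idem lrb (fun h => hne h.le) w hGT)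
  rw [spectrumGE_eq_insert_spectrumGT (fun x y h => by rw [hlam x, hlam y, h]) x,
    prod_insert (apply_notMem_spectrumGT hdist x), mul_comm, map_mul, map_sub, aeval_X, aeval_C,
    mul_sub, hH, ← Algebra.commutes, ← Algebra.smul_def, sub_self]
termination_by (univ.filter fun t => leftIdeal x ⊆ leftIdeal t).card
decreasing_by
  refine card_lt_card ((ssubset_iff_of_subset
    (monotone_filter_right _ fun _ _ h => hy.subset.trans h)).2 ⟨x, ?_, ?_⟩)
  · exact mem_filter.2 ⟨mem_univ x, subset_rfl⟩
  · exact fun h => hy.not_subset (mem_filter.1 h).2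

end Projection

end LeftRegularBand

open Polynomial in
open Classical in
theorem stmt_5 {S : Type*} [Monoid S] [Fintype S]
    (idem : ∀ x : S, x * x = x) (lrb : ∀ x y : S, x * y * x = x * y)
    (k : Type*) [Field k] (c : S → k)
    (w : MonoidAlgebra k S) (hw : w = ∑ t : S, MonoidAlgebra.single t (c t))
    (lam : S → k)
    (hlam : ∀ x : S,
      lam x = ∑ t ∈ Finset.univ.filter (fun t : S => leftIdeal x ⊆ leftIdeal t), c t)
    (hdist : ∀ x y : S, leftIdeal y ⊂ leftIdeal x → lam x ≠ lam y) :
    Polynomial.aeval w (∏ μ ∈ Finset.univ.image lam, (X - C μ)) = 0 := by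
  obtain ⟨z, hz⟩ := LeftRegularBand.exists_leftIdeal_subset_forall idem lrb
  have hproj : LeftRegularBand.projGE k idem lrb z w = w :=
    MonoidAlgebra.filterAlgHom_apply_eq_self hz w
  have hspec : LeftRegularBand.spectrumGE lam z = univ.image lam := by
    rw [LeftRegularBand.spectrumGE, filter_true_of_mem fun t _ => hz t]
  rw [← hproj, ← hspec, hw]
  exact LeftRegularBand.aeval_projGE_prod_spectrumGE_eq_zero idem lrb c lam hlam hdist z
end

section
/- Let S be a finite left regular band with identity and w ∈ ℝS a probability measure on S. Then the subalgebra ℝ[w] of ℝS generated by w is semisimple; in fact the minimal polynomial of w over ℝ has distinct real roots. -/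
/-!
For `y ∈ S` let `λ_y` be the weight of the stabilizer `{t | y t = y}`. Multiplying on the left
by `y` kills the stabilizer part of `w - λ_y`, leaving `Σ_{y t ≠ y} c_t · (y t)`; every `z` in the
left ideal `S (y t)` lies in `S y` and has `λ_z ≥ λ_y + c_t > λ_y` when `c_t > 0`. By induction
on the set of weights `{λ_z | z ∈ S y}`, `y · ∏ (w - λ)` over that set vanishes; at `y = 1` this
gives a polynomial with distinct real roots annihilating `w`. So `ℝ[w]` is a quotient of
`ℝ[X] ⧸ (p)` with `p` squarefree, a finite product of copies of `ℝ`.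
-/

open Polynomial Finset

section Semisimplicity

variable {K A : Type*} [Field K] [Ring A] [Algebra K A]

theorem squarefree_prod_X_sub_C (s : Finset K) : Squarefree (∏ a ∈ s, (X - C a)) :=
  (separable_prod_X_sub_C_iff' (f := id)).mpr (fun _ _ _ _ h ↦ h) |>.squarefree

theorem minpoly_splits_and_nodup_roots {x : A} {s : Finset K}
    (hx : aeval x (∏ a ∈ s, (X - C a)) = 0) :
    (minpoly K x).Splits ∧ (minpoly K x).roots.Nodup := by
  have hne : ∏ a ∈ s, (X - C a) ≠ 0 := (monic_prod_of_monic _ _ fun a _ ↦ monic_X_sub_C a).ne_zero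
  have hdvd := minpoly.dvd K x hx
  refine ⟨(Splits.prod fun a _ ↦ Splits.X_sub_C a).of_dvd hne hdvd, ?_⟩
  exact Multiset.nodup_of_le (roots.le_of_dvd hne hdvd) (roots_prod_X_sub_C s ▸ s.nodup)

theorem isSemisimpleRing_adjoinRoot {p : K[X]} (hp : Squarefree p) :
    IsSemisimpleRing (AdjoinRoot p) :=
  have : IsReduced (AdjoinRoot p) :=
    (Ideal.isRadical_iff_quotient_reduced _).mp (isRadical_iff_span_singleton.mp hp.isRadical)
  have : FiniteDimensional K (AdjoinRoot p) := (AdjoinRoot.powerBasis hp.ne_zero).finite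
  have : IsArtinianRing (AdjoinRoot p) := .of_finite K _
  IsArtinianRing.isSemisimpleRing_of_isReduced _

theorem isSemisimpleRing_adjoin_singleton_of_squarefree {x : A} {p : K[X]} (hp : Squarefree p)
    (hx : aeval x p = 0) : IsSemisimpleRing (Algebra.adjoin K {x}) := by
  have := isSemisimpleRing_adjoinRoot hp
  let f : K[X] →ₐ[K] Algebra.adjoin K {x} := aeval ⟨x, Algebra.self_mem_adjoin_singleton K x⟩
  have hf_val (q : K[X]) : (f q : A) = aeval x q := aeval_subalgebra_coe q _ _
  have hf : Function.Surjective f := by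
    rintro ⟨a, ha⟩
    rw [Algebra.adjoin_singleton_eq_range_aeval] at ha
    obtain ⟨q, rfl⟩ := ha
    exact ⟨q, Subtype.ext (hf_val q)⟩
  have hp_ker : ∀ q ∈ Ideal.span {p}, f q = 0 := by
    intro q hq
    obtain ⟨r, rfl⟩ := Ideal.mem_span_singleton'.mp hq
    exact Subtype.ext (by simp [hf_val, hx])
  exact RingHom.isSemisimpleRing_of_surjective (R := AdjoinRoot p) _
    (Ideal.Quotient.lift_surjective_of_surjective _ hp_ker hf)

end Semisimplicity

theorem mul_eq_left_trans {S : Type*} [Semigroup S] {x y z : S} (hxz : x * z = x)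
    (hzy : z * y = z) : x * y = x := by
  rw [← hxz, mul_assoc, hzy]

section StabWeight

variable {S R : Type*} [Monoid S] [Fintype S] [DecidableEq S] [AddCommMonoid R]

def stabWeight (c : S → R) (y : S) : R := ∑ t ∈ univ.filter (y * · = y), c t

-- For idempotent `y`, the set `{z | z * y = z}` is the left ideal `S y`.
def stabWeights [DecidableEq R] (c : S → R) (y : S) : Finset R :=
  (univ.filter fun z ↦ z * y = z).image (stabWeight c)

theorem stabWeight_mem_stabWeights [DecidableEq R] (idem : ∀ x : S, x * x = x) (c : S → R)
    (y : S) : stabWeight c y ∈ stabWeights c y :=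
  mem_image_of_mem (f := stabWeight c) (by simpa using idem y)

variable [PartialOrder R] [IsOrderedCancelAddMonoid R] {c : S → R}

theorem stabWeight_le_of_mul_eq (hc : ∀ t, 0 ≤ c t) {y z : S} (h : z * y = z) :
    stabWeight c y ≤ stabWeight c z := by
  refine sum_le_sum_of_subset_of_nonneg (fun t ht ↦ ?_) fun t _ _ ↦ hc t
  simp only [mem_filter, mem_univ, true_and] at ht ⊢
  exact mul_eq_left_trans h ht

theorem stabWeight_add_le_stabWeight_mul (idem : ∀ x : S, x * x = x)
    (lrb : ∀ x y : S, x * y * x = x * y) (hc : ∀ t, 0 ≤ c t) {y t : S}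
    (hyt : y * t ≠ y) : stabWeight c y + c t ≤ stabWeight c (y * t) := by
  have ht : t ∉ univ.filter (y * · = y) := by simpa using hyt
  rw [stabWeight, add_comm, ← sum_insert ht]
  refine sum_le_sum_of_subset_of_nonneg (fun s hs ↦ ?_) fun s _ _ ↦ hc s
  simp only [mem_insert, mem_filter, mem_univ, true_and] at hs ⊢
  rcases hs with rfl | hs
  · rw [mul_assoc, idem]
  · exact mul_eq_left_trans (lrb y t) hs

theorem stabWeights_mul_subset_erase [DecidableEq R] (idem : ∀ x : S, x * x = x)
    (lrb : ∀ x y : S, x * y * x = x * y) (hc : ∀ t, 0 ≤ c t) {y t : S}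
    (hyt : y * t ≠ y) (hct : 0 < c t) :
    stabWeights c (y * t) ⊆ (stabWeights c y).erase (stabWeight c y) := by
  intro l hl
  obtain ⟨z, hz, rfl⟩ := mem_image.mp (by rwa [stabWeights] at hl)
  simp only [mem_filter, mem_univ, true_and] at hz
  have hzy : z * y = z := mul_eq_left_trans hz (lrb y t)
  refine mem_erase.mpr ⟨(?_ : stabWeight c y < stabWeight c z).ne',
    mem_image_of_mem (f := stabWeight c) (by simpa using hzy)⟩
  calc stabWeight c y < stabWeight c y + c t := lt_add_of_pos_right _ hct
    _ ≤ stabWeight c (y * t) := stabWeight_add_le_stabWeight_mul idem lrb hc hyt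
    _ ≤ stabWeight c z := stabWeight_le_of_mul_eq hc hz

end StabWeight

section Annihilation

open MonoidAlgebra

variable {S R : Type*} [Monoid S] [Fintype S] [DecidableEq S] [CommRing R]

theorem single_mul_sub_stabWeight (c : S → R) (y : S) :
    single y 1 * (∑ t, single t (c t) - algebraMap R (MonoidAlgebra R S) (stabWeight c y)) =
      ∑ t ∈ univ.filter (y * · ≠ y), single (y * t) (c t) := by
  have hfix : ∑ t ∈ univ.filter (y * · = y), single (y * t) (c t) = single y (stabWeight c y) :=
    calc _ = ∑ t ∈ univ.filter (y * · = y), singleAddHom y (c t) :=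
          sum_congr rfl fun t ht ↦ by rw [(mem_filter.mp ht).2]; rfl
      _ = _ := (map_sum (singleAddHom y) c _).symm
  simp only [mul_sub, mul_sum, coe_algebraMap, Function.comp_apply, Algebra.algebraMap_self,
    RingHom.id_apply, single_mul_single, mul_one, one_mul]
  rw [← hfix, ← sum_filter_add_sum_filter_not univ (y * · = y), add_sub_cancel_left]

theorem single_mul_aeval_prod_eq_zero [PartialOrder R] [IsOrderedRing R] [DecidableEq R]
    (idem : ∀ x : S, x * x = x) (lrb : ∀ x y : S, x * y * x = x * y) {c : S → R}
    (hc : ∀ t, 0 ≤ c t) (y : S) {L : Finset R} (hL : stabWeights c y ⊆ L) :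
    single y 1 * aeval (∑ t, single t (c t)) (∏ l ∈ L, (X - C l)) = 0 := by
  induction hn : (stabWeights c y).card using Nat.strong_induction_on generalizing y L with
  | _ n ih =>
  have hy := stabWeight_mem_stabWeights idem c y
  rw [← mul_prod_erase L _ (hL hy), map_mul, ← mul_assoc, map_sub, aeval_X, aeval_C,
    single_mul_sub_stabWeight, sum_mul]
  refine sum_eq_zero fun t ht ↦ ?_
  have hyt : y * t ≠ y := (mem_filter.mp ht).2
  rcases (hc t).eq_or_lt with hct | hct
  · rw [← hct, single_zero, zero_mul]
  have hsub := stabWeights_mul_subset_erase idem lrb hc hyt hct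
  have hlt : (stabWeights c (y * t)).card < n :=
    hn ▸ (card_le_card hsub).trans_lt (card_erase_lt_of_mem hy)
  rw [← mul_one (c t), ← smul_single', smul_mul_assoc,
    ih _ hlt (y * t) (hsub.trans (erase_subset_erase _ hL)) rfl, smul_zero]

end Annihilation

theorem stmt_8_general {S : Type*} [Monoid S] [Fintype S]
    (idem : ∀ x : S, x * x = x) (lrb : ∀ x y : S, x * y * x = x * y)
    (c : S → ℝ) (hnonneg : ∀ t : S, 0 ≤ c t)
    (w : MonoidAlgebra ℝ S) (hw : w = ∑ t : S, MonoidAlgebra.single t (c t)) :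
    ((minpoly ℝ w).map (RingHom.id ℝ)).Splits ∧ (minpoly ℝ w).roots.Nodup ∧
      IsSemisimpleRing (Algebra.adjoin ℝ ({w} : Set (MonoidAlgebra ℝ S))) := by
  classical
  have hw_root : aeval w (∏ l ∈ stabWeights c 1, (X - C l)) = 0 := by
    simpa [hw, ← MonoidAlgebra.one_def] using
      single_mul_aeval_prod_eq_zero idem lrb hnonneg 1 subset_rfl
  rw [map_id]
  obtain ⟨hsplits, hnodup⟩ := minpoly_splits_and_nodup_roots hw_root
  exact ⟨hsplits, hnodup,
    isSemisimpleRing_adjoin_singleton_of_squarefree (squarefree_prod_X_sub_C _) hw_root⟩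

theorem stmt_8 {S : Type*} [Monoid S] [Fintype S]
    (idem : ∀ x : S, x * x = x) (lrb : ∀ x y : S, x * y * x = x * y)
    (c : S → ℝ) (hnonneg : ∀ t : S, 0 ≤ c t) (hsum : ∑ t : S, c t = 1)
    (w : MonoidAlgebra ℝ S) (hw : w = ∑ t : S, MonoidAlgebra.single t (c t)) :
    ((minpoly ℝ w).map (RingHom.id ℝ)).Splits ∧ (minpoly ℝ w).roots.Nodup ∧
      IsSemisimpleRing (Algebra.adjoin ℝ ({w} : Set (MonoidAlgebra ℝ S))) :=
  stmt_8_general idem lrb c hnonneg w hw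
end

section
/- Let S be a finite left regular band with identity, k a field, w = Σ_t w_t t ∈ kS with λ_X = Σ_{σ(t)≥X} w_t, and suppose σ(s) is the minimum element of the lattice L of principal left ideals (i.e., Ss ⊆ St for all t ∈ S). Then s·w = λ_{σ(s)}·s in kS; in particular s·(w − λ_{σ(s)}) = 0. -/
/- If `σ(s)` is the minimum of the lattice of principal left ideals, then `s` is a left zero,
`s t = s`, so left multiplication by `s` collapses every `t` in the support of `w` onto `s`, and
the coefficient of `s` in `s w` is the full sum of the `w_t`, which is `λ_{σ(s)}`. -/

theorem mul_eq_self_of_leftIdeal_subset {S : Type*} [Monoid S] {s t : S} (ht : t * t = t)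
    (h : leftIdeal s ⊆ leftIdeal t) : s * t = s := by
  obtain ⟨u, rfl⟩ := h ⟨1, (one_mul s).symm⟩
  rw [mul_assoc, ht]

theorem MonoidAlgebra.single_one_mul_sum_single_of_mul_eq_self {k S ι : Type*} [Semiring k]
    [Monoid S] {s : S} (f : ι → S) (hs : ∀ i, s * f i = s) (c : ι → k) (I : Finset ι) :
    single s (1 : k) * ∑ i ∈ I, single (f i) (c i) = (∑ i ∈ I, c i) • single s 1 := by
  simp only [Finset.mul_sum, single_mul_single, hs, one_mul, smul_single', mul_one]
  exact (map_sum (singleAddHom s) c I).symm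

open Classical in
theorem stmt_11_general {S : Type*} [Monoid S] [Fintype S]
    (idem : ∀ x : S, x * x = x)
    (k : Type*) [Field k] (c : S → k)
    (w : MonoidAlgebra k S) (hw : w = ∑ t : S, MonoidAlgebra.single t (c t))
    (lam : S → k)
    (hlam : ∀ x : S,
      lam x = ∑ t ∈ Finset.univ.filter (fun t : S => leftIdeal x ⊆ leftIdeal t), c t)
    (s : S) (hmin : ∀ t : S, leftIdeal s ⊆ leftIdeal t) :
    MonoidAlgebra.single s (1 : k) * w = lam s • MonoidAlgebra.single s (1 : k) ∧
    MonoidAlgebra.single s (1 : k) *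
      (w - algebraMap k (MonoidAlgebra k S) (lam s)) = 0 := by
  have hlam_s : lam s = ∑ t : S, c t := by
    rw [hlam, Finset.filter_true_of_mem fun t _ => hmin t]
  have hsw : MonoidAlgebra.single s (1 : k) * w = lam s • MonoidAlgebra.single s 1 := by
    rw [hw, hlam_s]
    exact MonoidAlgebra.single_one_mul_sum_single_of_mul_eq_self id
      (fun t => mul_eq_self_of_leftIdeal_subset (idem t) (hmin t)) c Finset.univ
  refine ⟨hsw, ?_⟩
  rw [mul_sub, hsw, Algebra.algebraMap_eq_smul_one, mul_smul_comm, mul_one, sub_self]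

open Classical in
theorem stmt_11 {S : Type*} [Monoid S] [Fintype S]
    (idem : ∀ x : S, x * x = x) (lrb : ∀ x y : S, x * y * x = x * y)
    (k : Type*) [Field k] (c : S → k)
    (w : MonoidAlgebra k S) (hw : w = ∑ t : S, MonoidAlgebra.single t (c t))
    (lam : S → k)
    (hlam : ∀ x : S,
      lam x = ∑ t ∈ Finset.univ.filter (fun t : S => leftIdeal x ⊆ leftIdeal t), c t)
    (s : S) (hmin : ∀ t : S, leftIdeal s ⊆ leftIdeal t) :
    MonoidAlgebra.single s (1 : k) * w = lam s • MonoidAlgebra.single s (1 : k) ∧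
    MonoidAlgebra.single s (1 : k) *
      (w - algebraMap k (MonoidAlgebra k S) (lam s)) = 0 :=
  stmt_11_general idem k c w hw lam hlam s hmin
end
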